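/- For 0 ≤ n ≤ √(N+1) and all x ∈ [0,N], the discrete Chebyshev polynomial of the second kind satisfies |U_n(x,N)| ≤ 1. -/

import Mathlib

open Finset

noncomputable def poch (a : ℝ) (k : ℕ) : ℝ := ∏ i ∈ Finset.range k, (a + i)

noncomputable def hahnQ (n : ℕ) (x α β : ℝ) (N : ℕ) : ℝ :=
  ∑ k ∈ Finset.range (n + 1),
    poch (-(n : ℝ)) k * poch ((n : ℝ) + α + β + 1) k * poch (-x) k /
      ((Nat.factorial k : ℝ) * poch (α + 1) k * poch (-(N : ℝ)) k)

noncomputable def binomR (a b : ℝ) : ℝ :=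
  Real.Gamma (a + 1) / (Real.Gamma (b + 1) * Real.Gamma (a - b + 1))

noncomputable def hahnWeight (x : ℕ) (α β : ℝ) (N : ℕ) : ℝ :=
  binomR ((x : ℝ) + α) (x : ℝ) * binomR ((N : ℝ) - x + β) ((N : ℝ) - x) /
    binomR ((N : ℝ) + α + β + 1) (N : ℝ)

noncomputable def hahnPi (n : ℕ) (α β : ℝ) (N : ℕ) : ℝ :=
  ((-1 : ℝ) ^ n * poch (-(N : ℝ)) n * poch (α + 1) n * poch (α + β + 1) n) /
      ((Nat.factorial n : ℝ) * poch ((N : ℝ) + α + β + 2) n * poch (β + 1) n) *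
    ((2 * (n : ℝ) + α + β + 1) / (α + β + 1))

noncomputable def kraw (n : ℕ) (x p : ℝ) (N : ℕ) : ℝ :=
  ∑ k ∈ Finset.range (n + 1),
    poch (-(n : ℝ)) k * poch (-x) k / ((Nat.factorial k : ℝ) * poch (-(N : ℝ)) k) * (1 / p) ^ k

noncomputable def dualR (n : ℕ) (lam α β : ℝ) (N : ℕ) : ℝ :=
  ∑ k ∈ Finset.range (n + 1),
    poch (-(n : ℝ)) k * (∏ i ∈ Finset.range k, ((i : ℝ) * (α + β + 1 + i) - lam)) /
      ((Nat.factorial k : ℝ) * poch (α + 1) k * poch (-(N : ℝ)) k)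

noncomputable def ktil (l : ℕ) (x p : ℝ) (N : ℕ) : ℝ :=
  (N.choose l : ℝ) * (p / (1 - p)) ^ l * kraw l x p N

/-!
For fixed `x`, the polynomials `q k = U_k(x, N)` satisfy the three-term recurrence
`(k+3)(N-k-1) q (k+2) = 2(k+2)(N-2x) q (k+1) - (k+1)(N+k+3) q k`, with `q 0 = 1` and
`q 1 = τ := 1 - 2x/N`. Writing it as `A q (k+2) = τ (A + C) q (k+1) - C q k`, the quadratic form
`E(u, v) = v² - 2τuv + u²` does not increase along consecutive pairs `(q k, q (k+1))` as long as
`C ≤ A`, which is exactly `(k+2)² ≤ N+1`. Hence `E(q k, q (k+1)) ≤ E(1, τ) = 1 - τ²`, and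
this together with `(q k)² ≤ 1` forces `(q (k+1))² ≤ 1`.
-/

lemma poch_zero (a : ℝ) : poch a 0 = 1 := by simp [poch]

lemma poch_succ_right (a : ℝ) (k : ℕ) : poch a (k + 1) = poch a k * (a + k) := by
  simp [poch, prod_range_succ]

lemma poch_succ_left (a : ℝ) (k : ℕ) : poch a (k + 1) = a * poch (a + 1) k := by
  simp only [poch, prod_range_succ', Nat.cast_add, Nat.cast_one, Nat.cast_zero, add_zero,
    add_assoc, add_comm (1 : ℝ)]
  ring

lemma poch_one (a : ℝ) : poch a 1 = a := by simp [poch]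

lemma mul_poch_add_one (a : ℝ) (k : ℕ) : a * poch (a + 1) k = poch a k * (a + k) := by
  rw [← poch_succ_left, poch_succ_right]

lemma poch_neg_nat_eq_zero {m k : ℕ} (h : m < k) : poch (-(m : ℝ)) k = 0 :=
  prod_eq_zero (mem_range.mpr h) (by simp)

lemma poch_neg_nat_ne_zero {N k : ℕ} (h : k ≤ N) : poch (-(N : ℝ)) k ≠ 0 := by
  refine prod_ne_zero_iff.mpr fun i hi => ?_
  have : (i : ℝ) < N := by exact_mod_cast (mem_range.mp hi).trans_le h
  linarith

lemma poch_pos {a : ℝ} (ha : 0 < a) (k : ℕ) : 0 < poch a k :=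
  prod_pos fun _ _ => by positivity

noncomputable def chebUCoeff (N n k : ℕ) : ℝ :=
  poch (-(n : ℝ)) k * poch ((n : ℝ) + 2) k /
    ((Nat.factorial k : ℝ) * poch (3 / 2) k * poch (-(N : ℝ)) k)

lemma chebUCoeff_zero (N n : ℕ) : chebUCoeff N n 0 = 1 := by
  simp [chebUCoeff, poch_zero]

lemma chebUCoeff_eq_zero_of_lt {N n k : ℕ} (h : n < k) : chebUCoeff N n k = 0 := by
  simp [chebUCoeff, poch_neg_nat_eq_zero h]

lemma hahnQ_half_eq_sum (n : ℕ) (x : ℝ) (N : ℕ) {M : ℕ} (hM : n + 1 ≤ M) :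
    hahnQ n x (1 / 2) (1 / 2) N = ∑ k ∈ range M, chebUCoeff N n k * poch (-x) k := by
  have hsum : hahnQ n x (1 / 2) (1 / 2) N =
      ∑ k ∈ range (n + 1), chebUCoeff N n k * poch (-x) k := by
    refine sum_congr rfl fun k _ => ?_
    rw [chebUCoeff, show (n : ℝ) + 1 / 2 + 1 / 2 + 1 = n + 2 by ring,
      show (1 : ℝ) / 2 + 1 = 3 / 2 by norm_num]
    ring
  rw [hsum]
  refine sum_subset (range_subset_range.mpr hM) fun k _ hk => ?_
  rw [chebUCoeff_eq_zero_of_lt (by simpa using hk), zero_mul]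

lemma hahnQ_half_zero (x : ℝ) (N : ℕ) : hahnQ 0 x (1 / 2) (1 / 2) N = 1 := by
  simp [hahnQ, poch_zero]

lemma hahnQ_half_one (x : ℝ) (N : ℕ) : hahnQ 1 x (1 / 2) (1 / 2) N = 1 - 2 * x / N := by
  simp only [hahnQ, sum_range_succ, sum_range_zero, poch_zero, poch_one]
  rcases eq_or_ne (N : ℝ) 0 with hN | hN
  · simp [hN]
  · field_simp
    ring

lemma chebUCoeff_rec (N i j : ℕ) (hj : j + 1 ≤ N) :
    ((i : ℝ) + 3) * (N - (i + 1)) * chebUCoeff N (i + 2) (j + 1) =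
      2 * ((i : ℝ) + 2) * ((N - 2 * (j + 1)) * chebUCoeff N (i + 1) (j + 1) +
          2 * chebUCoeff N (i + 1) j) -
        ((i : ℝ) + 1) * (N + i + 3) * chebUCoeff N i (j + 1) := by
  set P := poch (-((i : ℝ) + 1)) j
  set R := poch ((i : ℝ) + 3) j
  have hF : (Nat.factorial j : ℝ) ≠ 0 := by positivity
  have hG : poch (3 / 2) j ≠ 0 := (poch_pos (by norm_num) j).ne'
  have hH : poch (-(N : ℝ)) j ≠ 0 := poch_neg_nat_ne_zero (Nat.le_of_succ_le hj)
  have hNj : -(N : ℝ) + j ≠ 0 := by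
    have : (j : ℝ) + 1 ≤ N := by exact_mod_cast hj
    linarith
  have e1 : poch (-((i : ℝ) + 2)) (j + 1) = -((i : ℝ) + 2) * P := by
    rw [poch_succ_left, show -((i : ℝ) + 2) + 1 = -(i + 1) by ring]
  have e2 : poch ((i : ℝ) + 2 + 2) (j + 1) = R * (i + 3 + j) * (i + 4 + j) / (i + 3) := by
    rw [eq_div_iff (by positivity), mul_comm, show (i : ℝ) + 2 + 2 = i + 3 + 1 by ring,
      mul_poch_add_one, poch_succ_right]
    push_cast; ring
  have e3 : poch (-((i : ℝ) + 1)) (j + 1) = P * (-(i + 1) + j) := poch_succ_right _ _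
  have e4 : poch ((i : ℝ) + 1 + 2) (j + 1) = R * (i + 3 + j) := by
    rw [show (i : ℝ) + 1 + 2 = i + 3 by ring, poch_succ_right]
  have e5 : poch ((i : ℝ) + 1 + 2) j = R := by rw [show (i : ℝ) + 1 + 2 = i + 3 by ring]
  have e6 : poch (-(i : ℝ)) (j + 1) = P * (-(i + 1) + j) * (-i + j) / (-(i + 1)) := by
    rw [eq_div_iff (neg_ne_zero.mpr (by positivity)), mul_comm,
      show -(i : ℝ) = -(i + 1) + 1 by ring,
      mul_poch_add_one, poch_succ_right]
    push_cast; ring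
  have e7 : poch ((i : ℝ) + 2) (j + 1) = (i + 2) * R := by
    rw [poch_succ_left, show (i : ℝ) + 2 + 1 = i + 3 by ring]
  simp only [chebUCoeff, Nat.cast_add, Nat.cast_ofNat, Nat.cast_one, Nat.factorial_succ,
    Nat.cast_mul, poch_succ_right (3 / 2), poch_succ_right (-(N : ℝ)), e1, e2, e3, e4, e5, e6, e7]
  field_simp
  ring

-- `(a - 2x) poch (-x) k = (a - 2k) poch (-x) k + 2 poch (-x) (k+1)` moves the factor `x` onto `k`
lemma sub_two_mul_sum_mul_poch (a x : ℝ) (c : ℕ → ℝ) {M : ℕ} (hc : c M = 0) :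
    (a - 2 * x) * ∑ k ∈ range (M + 1), c k * poch (-x) k =
      ∑ k ∈ range M, ((a - 2 * ((k : ℝ) + 1)) * c (k + 1) + 2 * c k) * poch (-x) (k + 1) +
        a * c 0 := by
  calc (a - 2 * x) * ∑ k ∈ range (M + 1), c k * poch (-x) k
      = ∑ k ∈ range (M + 1),
          ((a - 2 * k) * c k * poch (-x) k + 2 * c k * poch (-x) (k + 1)) := by
        rw [mul_sum]
        refine sum_congr rfl fun k _ => ?_
        rw [poch_succ_right]
        ring
    _ = _ := by
        rw [sum_add_distrib, sum_range_succ', sum_range_succ _ M, hc]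
        simp only [add_mul, sum_add_distrib, poch_zero, Nat.cast_add, Nat.cast_one]
        ring

lemma hahnQ_half_rec (N l : ℕ) (x : ℝ) (hl : l + 3 ≤ N) :
    ((l : ℝ) + 3) * (N - (l + 1)) * hahnQ (l + 2) x (1 / 2) (1 / 2) N =
      2 * ((l : ℝ) + 2) * (N - 2 * x) * hahnQ (l + 1) x (1 / 2) (1 / 2) N -
        ((l : ℝ) + 1) * (N + l + 3) * hahnQ l x (1 / 2) (1 / 2) N := by
  rw [hahnQ_half_eq_sum (l + 2) x N (M := l + 3 + 1) (by omega),
    hahnQ_half_eq_sum (l + 1) x N (M := l + 3 + 1) (by omega),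
    hahnQ_half_eq_sum l x N (M := l + 3 + 1) (by omega), mul_assoc _ (N - 2 * x),
    sub_two_mul_sum_mul_poch _ _ _ (chebUCoeff_eq_zero_of_lt (by omega)),
    sum_range_succ', sum_range_succ' (fun k => chebUCoeff N l k * poch (-x) k),
    mul_add, mul_sum]
  have hterm : ∀ k ∈ range (l + 3),
      ((l : ℝ) + 3) * (N - (l + 1)) * (chebUCoeff N (l + 2) (k + 1) * poch (-x) (k + 1)) =
        2 * ((l : ℝ) + 2) * (((N - 2 * ((k : ℝ) + 1)) * chebUCoeff N (l + 1) (k + 1) +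
          2 * chebUCoeff N (l + 1) k) * poch (-x) (k + 1)) -
        ((l : ℝ) + 1) * (N + l + 3) * (chebUCoeff N l (k + 1) * poch (-x) (k + 1)) := by
    intro k hk
    linear_combination poch (-x) (k + 1) * chebUCoeff_rec N l k (by simp at hk; omega)
  rw [sum_congr rfl hterm, sum_sub_distrib, ← mul_sum, ← mul_sum]
  simp only [chebUCoeff_zero, poch_zero]
  ring

-- the decrease is `(A - C)(A + C)(τ v - u)² / A²`
lemma sq_sub_mul_add_sq_le_of_rec {τ A C u v w : ℝ} (hA : 0 < A) (hC : 0 ≤ C) (hCA : C ≤ A)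
    (hrec : A * w = τ * (A + C) * v - C * u) :
    w ^ 2 - 2 * τ * w * v + v ^ 2 ≤ v ^ 2 - 2 * τ * v * u + u ^ 2 := by
  have hw : w = (τ * (A + C) * v - C * u) / A := by
    rw [eq_div_iff hA.ne']
    linarith
  have hdiff : (v ^ 2 - 2 * τ * v * u + u ^ 2) - (w ^ 2 - 2 * τ * w * v + v ^ 2) =
      (A - C) * (A + C) * (τ * v - u) ^ 2 / A ^ 2 := by
    rw [hw]
    field_simp
    ring
  have : 0 ≤ (A - C) * (A + C) * (τ * v - u) ^ 2 / A ^ 2 := by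
    have : 0 ≤ A - C := by linarith
    positivity
  linarith

lemma sq_le_one_of_sq_sub_mul_add_sq_le {τ u v : ℝ} (hτ : τ ^ 2 ≤ 1) (hu : u ^ 2 ≤ 1)
    (hE : v ^ 2 - 2 * τ * v * u + u ^ 2 ≤ 1 - τ ^ 2) : v ^ 2 ≤ 1 := by
  have hvu : (v - τ * u) ^ 2 ≤ (1 - τ ^ 2) * (1 - u ^ 2) := by nlinarith
  rcases hτ.lt_or_eq with hτ | hτ
  · have hsplit : (1 - τ ^ 2) * (1 - v ^ 2) =
        ((1 - τ ^ 2) * (1 - u ^ 2) - (v - τ * u) ^ 2) +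
          ((1 - τ ^ 2) * u - τ * (v - τ * u)) ^ 2 := by
      ring
    nlinarith [sq_nonneg ((1 - τ ^ 2) * u - τ * (v - τ * u))]
  · have hv : v = τ * u := by nlinarith [sq_nonneg (v - τ * u)]
    rw [hv]
    nlinarith

theorem sq_le_one_of_three_term_rec {τ : ℝ} (hτ : τ ^ 2 ≤ 1) {q A C : ℕ → ℝ} {n : ℕ}
    (h0 : q 0 = 1) (h1 : q 1 = τ) (hA : ∀ k, k + 2 ≤ n → 0 < A k)
    (hC : ∀ k, k + 2 ≤ n → 0 ≤ C k) (hCA : ∀ k, k + 2 ≤ n → C k ≤ A k)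
    (hrec : ∀ k, k + 2 ≤ n → A k * q (k + 2) = τ * (A k + C k) * q (k + 1) - C k * q k) :
    ∀ k ≤ n, q k ^ 2 ≤ 1 := by
  have henergy : ∀ k, k + 1 ≤ n →
      q (k + 1) ^ 2 - 2 * τ * q (k + 1) * q k + q k ^ 2 ≤ 1 - τ ^ 2 := by
    intro k hk
    induction k with
    | zero =>
      rw [h0, h1]
      linarith
    | succ k ih =>
      exact (sq_sub_mul_add_sq_le_of_rec (hA k hk) (hC k hk) (hCA k hk) (hrec k hk)).trans
        (ih (by omega))
  intro k hk
  induction k with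
  | zero => simp [h0]
  | succ k ih => exact sq_le_one_of_sq_sub_mul_add_sq_le hτ (ih (by omega)) (henergy k hk)

lemma sq_one_sub_two_mul_div_le_one {x b : ℝ} (hx : x ∈ Set.Icc 0 b) :
    (1 - 2 * x / b) ^ 2 ≤ 1 := by
  have h0 : 0 ≤ x / b := div_nonneg hx.1 (hx.1.trans hx.2)
  have h1 : x / b ≤ 1 := div_le_one_of_le₀ hx.2 (hx.1.trans hx.2)
  rw [mul_div_assoc]
  nlinarith

theorem discrete_chebyshevU_bound_general (N : ℕ) (n : ℕ)
    (hn : (n : ℝ) ≤ Real.sqrt ((N : ℝ) + 1)) (x : ℝ) (hx : x ∈ Set.Icc (0 : ℝ) N) :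
    |hahnQ n x (1 / 2) (1 / 2) N| ≤ 1 := by
  have hsq : ∀ k : ℕ, k + 2 ≤ n → ((k : ℝ) + 2) ^ 2 ≤ N + 1 := fun k hk => by
    have : (k : ℝ) + 2 ≤ n := by exact_mod_cast hk
    nlinarith [(Real.le_sqrt (by positivity) (by positivity)).mp hn]
  have hkN : ∀ k : ℕ, k + 2 ≤ n → k + 3 ≤ N := fun k hk => by
    have := hsq k hk
    exact_mod_cast (show (k : ℝ) + 3 ≤ N by nlinarith)
  refine (sq_le_one_iff_abs_le_one _).mp <| sq_le_one_of_three_term_rec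
    (sq_one_sub_two_mul_div_le_one hx) (q := fun k => hahnQ k x (1 / 2) (1 / 2) N)
    (A := fun k => ((k : ℝ) + 3) * (N - (k + 1))) (C := fun k => ((k : ℝ) + 1) * (N + k + 3))
    (hahnQ_half_zero x N) (hahnQ_half_one x N) (fun k h => ?_) (fun k h => ?_) (fun k h => ?_)
    (fun k h => ?_) n le_rfl
  · have : (k : ℝ) + 3 ≤ N := by exact_mod_cast hkN k h
    nlinarith
  · positivity
  · nlinarith [hsq k h]
  · have hN : (N : ℝ) ≠ 0 := Nat.cast_ne_zero.mpr (by have := hkN k h; omega)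
    rw [hahnQ_half_rec N k x (hkN k h)]
    field_simp
    ring

theorem discrete_chebyshevU_bound (N : ℕ) (hN : 0 < N) (n : ℕ)
    (hn : (n : ℝ) ≤ Real.sqrt ((N : ℝ) + 1)) (x : ℝ) (hx : x ∈ Set.Icc (0 : ℝ) N) :
    |hahnQ n x (1 / 2) (1 / 2) N| ≤ 1 :=
  discrete_chebyshevU_bound_general N n hn x hx
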